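/- arXiv:2605.13806 — 2 statements merged into one kernel-verified Lean document; each statement's English description precedes it below -/
import Mathlib

section
/- Let c₁ < c₂, Δ = c₂ - c₁, and φ(x) = η(x-c₁)/(η(x-c₁)+η(c₂-x)) with η(x) = exp(-1/x)·1{x>0}. Then for every x ∈ (c₁, c₂), |φ'(x)| ≤ exp(2/Δ). -/
/-!
On `(c₁, c₂)` we have `φ = A / (A + B)` with `A = exp (-1 / a)`, `B = exp (-1 / b)`, `a = x - c₁`,
`b = c₂ - x`. The quotient rule gives `φ' = (A' B - A B') / (A + B)²`, and since
`|A'| = A / a² ≤ 1` (as `s² ≤ eˢ`) and likewise `|B'| ≤ 1`, we get `|φ'| ≤ 1 / (A + B)`.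
Finally `max a b ≥ Δ / 2`, so `A + B ≥ exp (-2 / Δ)`.
-/

open Real Filter Topology

lemma sq_le_exp_of_nonneg {t : ℝ} (ht : 0 ≤ t) : t ^ 2 ≤ exp t := by
  have h := sum_le_exp_of_nonneg ht 4
  simp only [Finset.sum_range_succ, Finset.sum_range_zero, Nat.factorial] at h
  norm_num at h
  nlinarith [pow_nonneg ht 3, sq_nonneg (t - 1)]

lemma exp_neg_inv_div_sq_le_one {t : ℝ} (ht : 0 < t) : exp (-1 / t) / t ^ 2 ≤ 1 := by
  have h : (1 / t) ^ 2 ≤ exp (1 / t) := sq_le_exp_of_nonneg (by positivity)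
  rw [div_le_one (by positivity), neg_div, exp_neg, inv_le_iff_one_le_mul₀ (exp_pos _)]
  calc 1 = t ^ 2 * (1 / t) ^ 2 := by field_simp
    _ ≤ t ^ 2 * exp (1 / t) := by gcongr

lemma hasDerivAt_exp_neg_inv {t : ℝ} (ht : t ≠ 0) :
    HasDerivAt (fun s ↦ exp (-1 / s)) (exp (-1 / t) / t ^ 2) t := by
  have h := ((hasDerivAt_inv ht).neg).exp
  simp only [Pi.neg_apply, neg_neg] at h
  convert h using 1
  · ext s; rw [neg_div, one_div]
  · rw [neg_div, one_div, div_eq_mul_inv]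

lemma abs_quotient_rule_div_add_le {A B A' B' : ℝ} (hA : 0 ≤ A) (hB : 0 ≤ B) (hAB : 0 < A + B)
    (hA' : |A'| ≤ 1) (hB' : |B'| ≤ 1) :
    |(A' * (A + B) - A * (A' + B')) / (A + B) ^ 2| ≤ (A + B)⁻¹ := by
  have hnum : |A' * B - A * B'| ≤ A + B :=
    calc |A' * B - A * B'| ≤ |A'| * B + A * |B'| := by
          simpa [abs_mul, abs_of_nonneg hA, abs_of_nonneg hB] using abs_sub (A' * B) (A * B')
      _ ≤ 1 * B + A * 1 := by gcongr
      _ = A + B := by ring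
  have hsq : 0 < (A + B) ^ 2 := pow_pos hAB 2
  rw [show A' * (A + B) - A * (A' + B') = A' * B - A * B' by ring, abs_div, abs_of_pos hsq,
    div_le_iff₀ hsq]
  exact hnum.trans_eq (by field_simp)

lemma exp_neg_two_div_add_le {a b : ℝ} (ha : 0 < a) (hb : 0 < b) :
    exp (-(2 / (a + b))) ≤ exp (-1 / a) + exp (-1 / b) := by
  have of_half_le : ∀ {s : ℝ}, 0 < s → (a + b) / 2 ≤ s → exp (-(2 / (a + b))) ≤ exp (-1 / s) := by
    intro s hs hle
    rw [exp_le_exp, neg_div, neg_le_neg_iff, div_le_div_iff₀ hs (by linarith)]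
    linarith
  rcases le_total ((a + b) / 2) a with h | h
  · linarith [of_half_le ha h, exp_pos (-1 / b)]
  · linarith [of_half_le hb (by linarith), exp_pos (-1 / a)]

theorem stmt_5_general (c₁ c₂ : ℝ)
    (η : ℝ → ℝ) (hη : ∀ x : ℝ, η x = if 0 < x then Real.exp (-1 / x) else 0)
    (φ : ℝ → ℝ) (hφ : ∀ x : ℝ, φ x = η (x - c₁) / (η (x - c₁) + η (c₂ - x))) :
    ∀ x ∈ Set.Ioo c₁ c₂, |deriv φ x| ≤ Real.exp (2 / (c₂ - c₁)) := by
  intro x hx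
  have ha : 0 < x - c₁ := sub_pos.2 hx.1
  have hb : 0 < c₂ - x := sub_pos.2 hx.2
  have hφ_eq : φ =ᶠ[𝓝 x]
      fun y ↦ exp (-1 / (y - c₁)) / (exp (-1 / (y - c₁)) + exp (-1 / (c₂ - y))) := by
    filter_upwards [isOpen_Ioo.mem_nhds hx] with y hy
    rw [hφ, hη, hη, if_pos (sub_pos.2 hy.1), if_pos (sub_pos.2 hy.2)]
  have hA := (hasDerivAt_exp_neg_inv ha.ne').comp_sub_const x c₁
  have hB := (hasDerivAt_exp_neg_inv hb.ne').comp_const_sub c₂ x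
  have hAB := add_pos (exp_pos (-1 / (x - c₁))) (exp_pos (-1 / (c₂ - x)))
  have hD : HasDerivAt (fun y ↦ exp (-1 / (y - c₁)) / (exp (-1 / (y - c₁)) + exp (-1 / (c₂ - y))))
      _ x := hA.div (hA.add hB) hAB.ne'
  rw [hφ_eq.deriv_eq, hD.deriv]
  calc _ ≤ (exp (-1 / (x - c₁)) + exp (-1 / (c₂ - x)))⁻¹ :=
        abs_quotient_rule_div_add_le (exp_pos _).le (exp_pos _).le hAB
          (by rw [abs_of_nonneg (by positivity)]; exact exp_neg_inv_div_sq_le_one ha)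
          (by rw [abs_neg, abs_of_nonneg (by positivity)]; exact exp_neg_inv_div_sq_le_one hb)
    _ ≤ (exp (-(2 / (c₂ - c₁))))⁻¹ := by
        refine inv_anti₀ (exp_pos _) ?_
        simpa using exp_neg_two_div_add_le ha hb
    _ = exp (2 / (c₂ - c₁)) := by rw [exp_neg, inv_inv]

theorem stmt_5 (c₁ c₂ : ℝ) (hc : c₁ < c₂)
    (η : ℝ → ℝ) (hη : ∀ x : ℝ, η x = if 0 < x then Real.exp (-1 / x) else 0)
    (φ : ℝ → ℝ) (hφ : ∀ x : ℝ, φ x = η (x - c₁) / (η (x - c₁) + η (c₂ - x))) :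
    ∀ x ∈ Set.Ioo c₁ c₂, |deriv φ x| ≤ Real.exp (2 / (c₂ - c₁)) :=
  stmt_5_general c₁ c₂ η hη φ hφ
end

section
/- Let ℓ : ℝ → [0,1] be continuous with ℓ(z) = 0 for z ≤ 5/12 and ℓ(z) = 1 for z ≥ 7/12. Suppose z_u, z_v, z_w ∈ [0,1] satisfy |ℓ(z_u + 1/4) - z_v| ≤ 1/12 and |ℓ(z_u - 1/4) - z_w| ≤ 1/12. Then: (a) if z_u ≤ 1/6, then z_v ≤ 1/6 and z_w ≤ 1/6; (b) if z_u ≥ 5/6, then z_v ≥ 5/6 and z_w ≥ 5/6; (c) in all cases, z_v ≥ 5/6 or z_w ≤ 1/6. -/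
theorem stmt_18 (l : ℝ → ℝ) (hlc : Continuous l)
    (hl01 : ∀ z : ℝ, l z ∈ Set.Icc (0 : ℝ) 1)
    (hl0 : ∀ z : ℝ, z ≤ 5 / 12 → l z = 0)
    (hl1 : ∀ z : ℝ, 7 / 12 ≤ z → l z = 1)
    (zu zv zw : ℝ)
    (hzu : zu ∈ Set.Icc (0 : ℝ) 1) (hzv : zv ∈ Set.Icc (0 : ℝ) 1)
    (hzw : zw ∈ Set.Icc (0 : ℝ) 1)
    (hv : |l (zu + 1 / 4) - zv| ≤ 1 / 12)
    (hw : |l (zu - 1 / 4) - zw| ≤ 1 / 12) :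
    (zu ≤ 1 / 6 → zv ≤ 1 / 6 ∧ zw ≤ 1 / 6) ∧
    (5 / 6 ≤ zu → 5 / 6 ≤ zv ∧ 5 / 6 ≤ zw) ∧
    (5 / 6 ≤ zv ∨ zw ≤ 1 / 6) := by
  rw [abs_le] at hv hw
  refine ⟨?_, ?_, ?_⟩
  · intro h
    have h1 := hl0 (zu + 1/4) (by linarith)
    have h2 := hl0 (zu - 1/4) (by linarith)
    constructor <;> linarith
  · intro h
    have h1 := hl1 (zu + 1/4) (by linarith)
    have h2 := hl1 (zu - 1/4) (by linarith)
    constructor <;> linarith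
  · rcases le_or_gt zu (1/3) with h | h
    · right
      have h2 := hl0 (zu - 1/4) (by linarith)
      linarith
    · left
      have h1 := hl1 (zu + 1/4) (by linarith)
      linarith
end
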